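/- Let V be a finite complex measure on ℝ³ and μ a finite complex measure on ℝ³ with μ = −V·(R⁺₀(λ²)μ) for some λ ≠ 0 (i.e. μ solves the eigenvalue equation (I + V R⁺₀(λ²))μ = 0). Suppose the positive measure |V| satisfies the local Kato condition. Then the function ψ = R⁺₀(λ²)μ is bounded: sup_{x∈ℝ³} |ψ(x)| < ∞. -/

import Mathlib

open MeasureTheory Metric Filter

/-- Kernel of the free resolvent `R₀⁺(λ²)` in ℝ³: `e^{iλ|x−y|}/(4π|x−y|)`. -/
noncomputable def resKernelPos (lam : ℝ) (x y : EuclideanSpace ℝ (Fin 3)) : ℂ :=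
  Complex.exp (Complex.I * (lam : ℂ) * (‖x - y‖ : ℝ)) /
    ((4 * Real.pi * ‖x - y‖ : ℝ) : ℂ)

open scoped ENNReal


abbrev E3 := EuclideanSpace ℝ (Fin 3)

noncomputable def kap (x z : E3) : ℝ≥0∞ := (ENNReal.ofReal ‖x - z‖)⁻¹

lemma kap_meas2 : Measurable (fun p : E3 × E3 => kap p.1 p.2) :=
  (((continuous_fst.sub continuous_snd).norm).measurable.ennreal_ofReal).inv

lemma kap_meas (z : E3) : Measurable (fun x : E3 => kap x z) :=
  (((continuous_id.sub continuous_const).norm).measurable.ennreal_ofReal).inv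

lemma kap_meas' (x : E3) : Measurable (fun z : E3 => kap x z) :=
  (((continuous_const.sub continuous_id).norm).measurable.ennreal_ofReal).inv

lemma kap_le_two_mul {a b : ℝ} (h : a ≤ 2 * b) :
    (ENNReal.ofReal b)⁻¹ ≤ 2 * (ENNReal.ofReal a)⁻¹ := by
  have h1 : ENNReal.ofReal a ≤ 2 * ENNReal.ofReal b := by
    calc ENNReal.ofReal a ≤ ENNReal.ofReal (2 * b) := ENNReal.ofReal_le_ofReal h
    _ = 2 * ENNReal.ofReal b := by
        rw [ENNReal.ofReal_mul (by norm_num)]; norm_num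
  have h2 : (2 * ENNReal.ofReal b)⁻¹ ≤ (ENNReal.ofReal a)⁻¹ := ENNReal.inv_le_inv.mpr h1
  rw [ENNReal.mul_inv (Or.inl (by norm_num)) (Or.inl (by norm_num))] at h2
  calc (ENNReal.ofReal b)⁻¹ = 2 * (2⁻¹ * (ENNReal.ofReal b)⁻¹) := by
        rw [← mul_assoc, ENNReal.mul_inv_cancel (by norm_num) (by norm_num), one_mul]
  _ ≤ 2 * (ENNReal.ofReal a)⁻¹ := mul_le_mul_right h2 2

-- kap w z ≤ 2 * kap x z  when ‖w - x‖ ≤ ‖w - z‖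
lemma kap_tri1 {x z w : E3} (h : ‖w - x‖ ≤ ‖w - z‖) : kap w z ≤ 2 * kap x z := by
  apply kap_le_two_mul
  calc ‖x - z‖ ≤ ‖x - w‖ + ‖w - z‖ := norm_sub_le_norm_sub_add_norm_sub x w z
  _ ≤ 2 * ‖w - z‖ := by rw [norm_sub_rev x w]; linarith

-- kap x w ≤ 2 * kap x z  when ‖w - z‖ ≤ ‖w - x‖
lemma kap_tri2 {x z w : E3} (h : ‖w - z‖ ≤ ‖w - x‖) : kap x w ≤ 2 * kap x z := by
  apply kap_le_two_mul
  calc ‖x - z‖ ≤ ‖x - w‖ + ‖w - z‖ := norm_sub_le_norm_sub_add_norm_sub x w z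
  _ ≤ 2 * ‖x - w‖ := by rw [norm_sub_rev w x] at h; linarith

section
variable {V : Measure E3} {r : ℝ} {ε : ℝ≥0∞}

-- S1
lemma S1 (hε : ∀ y : E3, ∫⁻ w in ball y r, kap w y ∂V ≤ ε) (x z : E3) :
    ∫⁻ w in ball x r, kap w z ∂V ≤ 2 * ε := by
  set s1 : Set E3 := {w | ‖w - x‖ ≤ ‖w - z‖} with hs1
  have hms : MeasurableSet s1 := by
    apply measurableSet_le
    · exact (measurable_id.sub measurable_const).norm
    · exact (measurable_id.sub measurable_const).norm
  have := lintegral_add_compl (μ := V.restrict (ball x r)) (fun w => kap w z) hms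
  rw [← this]
  have hA : ∫⁻ w in s1, kap w z ∂(V.restrict (ball x r)) ≤ ε := by
    rw [Measure.restrict_restrict hms]
    calc ∫⁻ w in s1 ∩ ball x r, kap w z ∂V ≤ ∫⁻ w in s1 ∩ ball x r, kap w x ∂V := by
          apply setLIntegral_mono (kap_meas x)
          intro w hw
          unfold kap
          exact ENNReal.inv_le_inv.mpr (ENNReal.ofReal_le_ofReal hw.1)
    _ ≤ ∫⁻ w in ball x r, kap w x ∂V := lintegral_mono_set Set.inter_subset_right
    _ ≤ ε := hε x
  have hB : ∫⁻ w in s1ᶜ, kap w z ∂(V.restrict (ball x r)) ≤ ε := by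
    rw [Measure.restrict_restrict hms.compl]
    calc ∫⁻ w in s1ᶜ ∩ ball x r, kap w z ∂V ≤ ∫⁻ w in ball z r, kap w z ∂V := by
          apply lintegral_mono_set
          rintro w ⟨hw1, hw2⟩
          simp only [hs1, Set.mem_setOf_eq, not_le, Set.mem_compl_iff] at hw1
          simp only [mem_ball] at hw2 ⊢
          rw [dist_eq_norm] at hw2 ⊢
          exact lt_trans hw1 hw2
    _ ≤ ε := hε z
  calc _ ≤ ε + ε := add_le_add hA hB
  _ = 2 * ε := (two_mul ε).symm

-- composition lemma, untruncated (x ≠ z not needed)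
lemma S2 (hε : ∀ y : E3, ∫⁻ w in ball y r, kap w y ∂V ≤ ε) (x z : E3) :
    ∫⁻ w in ball x r, kap x w * kap w z ∂V ≤ 4 * ε * kap x z := by
  set s1 : Set E3 := {w | ‖w - x‖ ≤ ‖w - z‖} with hs1
  have hms : MeasurableSet s1 := by
    apply measurableSet_le
    · exact (continuous_id.sub continuous_const).norm.measurable
    · exact (continuous_id.sub continuous_const).norm.measurable
  have := lintegral_add_compl (μ := V.restrict (ball x r)) (fun w => kap x w * kap w z) hms
  rw [← this]
  have hA : ∫⁻ w in s1, kap x w * kap w z ∂(V.restrict (ball x r)) ≤ 2 * ε * kap x z := by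
    rw [Measure.restrict_restrict hms]
    calc ∫⁻ w in s1 ∩ ball x r, kap x w * kap w z ∂V
        ≤ ∫⁻ w in s1 ∩ ball x r, kap x w * (2 * kap x z) ∂V := by
          apply setLIntegral_mono ((kap_meas' x).mul_const _)
          intro w hw
          exact mul_le_mul_right (kap_tri1 hw.1) _
    _ ≤ ∫⁻ w in ball x r, kap x w * (2 * kap x z) ∂V := lintegral_mono_set Set.inter_subset_right
    _ = (∫⁻ w in ball x r, kap x w ∂V) * (2 * kap x z) := lintegral_mul_const _ (kap_meas' x)
    _ ≤ ε * (2 * kap x z) := mul_le_mul_left (by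
          have : ∫⁻ w in ball x r, kap x w ∂V = ∫⁻ w in ball x r, kap w x ∂V := by
            apply lintegral_congr; intro w; unfold kap; rw [norm_sub_rev]
          rw [this]; exact hε x) _
    _ = 2 * ε * kap x z := by ring
  have hB : ∫⁻ w in s1ᶜ, kap x w * kap w z ∂(V.restrict (ball x r)) ≤ 2 * ε * kap x z := by
    rw [Measure.restrict_restrict hms.compl]
    calc ∫⁻ w in s1ᶜ ∩ ball x r, kap x w * kap w z ∂V
        ≤ ∫⁻ w in s1ᶜ ∩ ball x r, (2 * kap x z) * kap w z ∂V := by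
          apply setLIntegral_mono ((kap_meas z).const_mul _)
          intro w hw
          have h1 : ¬ ‖w - x‖ ≤ ‖w - z‖ := hw.1
          exact mul_le_mul_left (kap_tri2 (not_le.mp h1).le) _
    _ ≤ ∫⁻ w in ball z r, (2 * kap x z) * kap w z ∂V := by
          apply lintegral_mono_set
          rintro w ⟨hw1, hw2⟩
          simp only [hs1, Set.mem_compl_iff, Set.mem_setOf_eq, not_le] at hw1
          simp only [mem_ball, dist_eq_norm] at hw2 ⊢
          exact lt_trans hw1 hw2
    _ = (2 * kap x z) * ∫⁻ w in ball z r, kap w z ∂V := lintegral_const_mul _ (kap_meas z)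
    _ ≤ (2 * kap x z) * ε := mul_le_mul_right (hε z) _
    _ = 2 * ε * kap x z := by ring
  calc _ ≤ 2 * ε * kap x z + 2 * ε * kap x z := add_le_add hA hB
  _ = 4 * ε * kap x z := by ring

-- truncated composition lemma
lemma S2trunc (hε : ∀ y : E3, ∫⁻ w in ball y r, kap w y ∂V ≤ ε) (x z : E3) (N : ℝ≥0∞) :
    ∫⁻ w in ball x r, min (kap x w) N * kap w z ∂V ≤ 4 * ε * min (kap x z) N := by
  rcases le_total (kap x z) N with hc | hc
  · rw [min_eq_left hc]
    calc ∫⁻ w in ball x r, min (kap x w) N * kap w z ∂V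
        ≤ ∫⁻ w in ball x r, kap x w * kap w z ∂V := by
          apply lintegral_mono; intro w; exact mul_le_mul_left (min_le_left _ _) _
    _ ≤ 4 * ε * kap x z := S2 hε x z
  · rw [min_eq_right hc]
    calc ∫⁻ w in ball x r, min (kap x w) N * kap w z ∂V
        ≤ ∫⁻ w in ball x r, N * kap w z ∂V := by
          apply lintegral_mono; intro w; exact mul_le_mul_left (min_le_right _ _) _
    _ = N * ∫⁻ w in ball x r, kap w z ∂V := lintegral_const_mul _ (kap_meas z)
    _ ≤ N * (2 * ε) := mul_le_mul_right (S1 hε x z) _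
    _ = 2 * ε * N := by ring
    _ ≤ 4 * ε * N := mul_le_mul_left (mul_le_mul_left (by norm_num) ε) N
end


-- arithmetic helpers
lemma half_absorb {a C : ℝ≥0∞} (ha : a ≠ ⊤) (h : a ≤ 2⁻¹ * a + C) : a ≤ 2 * C := by
  have h1 : a - 2⁻¹ * a ≤ C := tsub_le_iff_right.mpr (by rwa [add_comm] at h)
  have h2 : 2⁻¹ * a = a / 2 := by rw [ENNReal.div_eq_inv_mul]
  rw [h2, ENNReal.sub_half ha] at h1
  calc a = a / 2 + a / 2 := (ENNReal.add_halves a).symm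
  _ ≤ C + C := add_le_add h1 h1
  _ = 2 * C := (two_mul C).symm

lemma isup_min_nat (a : ℝ≥0∞) : ⨆ n : ℕ, min a (n : ℝ≥0∞) = a := by
  apply le_antisymm (iSup_le fun n => min_le_left _ _)
  rcases eq_or_ne a ⊤ with h | h
  · subst h
    have : ⨆ n : ℕ, min (⊤ : ℝ≥0∞) (n : ℝ≥0∞) = ⨆ n : ℕ, (n : ℝ≥0∞) := by
      apply iSup_congr; intro n; simp
    rw [this]
    simp [ENNReal.iSup_natCast]
  · obtain ⟨n, hn⟩ := ENNReal.exists_nat_gt h.lt_top.ne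
    calc a = min a n := (min_eq_left hn.le).symm
    _ ≤ ⨆ n : ℕ, min a (n : ℝ≥0∞) := le_iSup (fun n : ℕ => min a (n : ℝ≥0∞)) n

example : (2:ℝ) ≤ Real.pi := by linarith [Real.pi_gt_three]

lemma c4_four_le : (ENNReal.ofReal (4 * Real.pi))⁻¹ * 4 ≤ 2⁻¹ := by
  have h8 : (8:ℝ≥0∞) ≤ ENNReal.ofReal (4 * Real.pi) := by
    have : (8:ℝ) ≤ 4 * Real.pi := by linarith [Real.pi_gt_three]
    calc (8:ℝ≥0∞) = ENNReal.ofReal 8 := by norm_num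
    _ ≤ _ := ENNReal.ofReal_le_ofReal this
  have h1 : (ENNReal.ofReal (4 * Real.pi))⁻¹ ≤ 8⁻¹ := ENNReal.inv_le_inv.mpr h8
  calc (ENNReal.ofReal (4 * Real.pi))⁻¹ * 4 ≤ 8⁻¹ * 4 := mul_le_mul_left h1 4
  _ = 2⁻¹ := by
      have : (8:ℝ≥0∞) = 2 * 4 := by norm_num
      rw [this, ENNReal.mul_inv (Or.inl (by norm_num)) (Or.inl (by norm_num)), mul_assoc,
        ENNReal.inv_mul_cancel (by norm_num) (by norm_num), mul_one]

noncomputable def c4 : ℝ≥0∞ := (ENNReal.ofReal (4 * Real.pi))⁻¹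

lemma c4_ne_top : c4 ≠ ⊤ := by
  unfold c4
  simp only [ne_eq, ENNReal.inv_eq_top]
  exact (ENNReal.ofReal_pos.mpr (by positivity)).ne'

section bootstrap
variable {V μ : Measure E3} [IsFiniteMeasure V] [IsFiniteMeasure μ]
  {Ψ : E3 → ℝ≥0∞} {r : ℝ} {ε : ℝ≥0∞}

lemma bootstrap (hr : 0 < r) (hε1 : ε ≤ 1)
    (hε : ∀ y : E3, ∫⁻ w in ball y r, kap w y ∂V ≤ ε)
    (hΨm : Measurable Ψ)
    (hdom : μ ≤ V.withDensity Ψ)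
    (hΨ : ∀ w : E3, Ψ w ≤ c4 * ∫⁻ z, kap w z ∂μ) :
    ∀ x : E3, ∫⁻ z, kap x z ∂μ ≤
      2 * (c4 * ((ENNReal.ofReal r)⁻¹ * ((ε + (ENNReal.ofReal r)⁻¹ * V Set.univ) * μ Set.univ))) := by
  intro x
  set C1 : ℝ≥0∞ :=
    c4 * ((ENNReal.ofReal r)⁻¹ * ((ε + (ENNReal.ofReal r)⁻¹ * V Set.univ) * μ Set.univ)) with hC1
  -- bound on ∫ G dV
  have hGmeas : Measurable (fun w : E3 => ∫⁻ z, kap w z ∂μ) := by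
    exact Measurable.lintegral_prod_right' kap_meas2

  have hGint : ∫⁻ w, (∫⁻ z, kap w z ∂μ) ∂V ≤ (ε + (ENNReal.ofReal r)⁻¹ * V Set.univ) * μ Set.univ := by
    rw [lintegral_lintegral_swap kap_meas2.aemeasurable]
    calc ∫⁻ z, (∫⁻ w, kap w z ∂V) ∂μ
        ≤ ∫⁻ _z, (ε + (ENNReal.ofReal r)⁻¹ * V Set.univ) ∂μ := by
          apply lintegral_mono
          intro z
          dsimp only
          rw [← lintegral_add_compl (fun w => kap w z) measurableSet_ball (μ := V) (A := ball z r)]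
          apply add_le_add (hε z)
          calc ∫⁻ w in (ball z r)ᶜ, kap w z ∂V ≤ ∫⁻ _w in (ball z r)ᶜ, (ENNReal.ofReal r)⁻¹ ∂V := by
                apply setLIntegral_mono measurable_const
                intro w hw
                unfold kap
                apply ENNReal.inv_le_inv.mpr
                apply ENNReal.ofReal_le_ofReal
                have : ¬ dist w z < r := hw
                rw [dist_eq_norm] at this
                linarith [not_lt.mp this]
          _ = (ENNReal.ofReal r)⁻¹ * V ((ball z r)ᶜ) := by
                rw [setLIntegral_const]
          _ ≤ (ENNReal.ofReal r)⁻¹ * V Set.univ :=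
                mul_le_mul_right (measure_mono (Set.subset_univ _)) _
    _ = (ε + (ENNReal.ofReal r)⁻¹ * V Set.univ) * μ Set.univ := by
          rw [lintegral_const]
  -- per-truncation bound
  have key : ∀ N : ℕ, ∫⁻ z, min (kap x z) N ∂μ ≤ 2 * C1 := by
    intro N
    set HN : ℝ≥0∞ := ∫⁻ z, min (kap x z) N ∂μ with hHN
    have hHNfin : HN ≠ ⊤ := by
      have : HN ≤ ∫⁻ _z, (N : ℝ≥0∞) ∂μ := lintegral_mono fun z => min_le_right _ _
      rw [lintegral_const] at this
      exact (this.trans_lt (by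
        apply ENNReal.mul_lt_top (by simp) (measure_lt_top μ _))).ne
    have hκNm : Measurable (fun z : E3 => min (kap x z) N) := (kap_meas' x).min measurable_const
    -- step 1+2
    have step12 : HN ≤ ∫⁻ w, min (kap x w) (N:ℝ≥0∞) * (c4 * ∫⁻ z, kap w z ∂μ) ∂V := by
      calc HN ≤ ∫⁻ z, min (kap x z) N ∂(V.withDensity Ψ) := lintegral_mono' hdom le_rfl
      _ = ∫⁻ w, Ψ w * min (kap x w) N ∂V := by
          rw [lintegral_withDensity_eq_lintegral_mul V hΨm hκNm]; rfl
      _ ≤ ∫⁻ w, (c4 * ∫⁻ z, kap w z ∂μ) * min (kap x w) N ∂V := by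
          apply lintegral_mono; intro w; exact mul_le_mul_left (hΨ w) _
      _ = ∫⁻ w, min (kap x w) (N:ℝ≥0∞) * (c4 * ∫⁻ z, kap w z ∂μ) ∂V := by
          apply lintegral_congr; intro w; ring
    -- split near / far
    have hsplit := lintegral_add_compl
      (fun w => min (kap x w) (N:ℝ≥0∞) * (c4 * ∫⁻ z, kap w z ∂μ)) measurableSet_ball
      (μ := V) (A := ball x r)
    -- far part
    have hfar : ∫⁻ w in (ball x r)ᶜ, min (kap x w) (N:ℝ≥0∞) * (c4 * ∫⁻ z, kap w z ∂μ) ∂V ≤ C1 := by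
      calc ∫⁻ w in (ball x r)ᶜ, min (kap x w) (N:ℝ≥0∞) * (c4 * ∫⁻ z, kap w z ∂μ) ∂V
          ≤ ∫⁻ w in (ball x r)ᶜ, (ENNReal.ofReal r)⁻¹ * (c4 * ∫⁻ z, kap w z ∂μ) ∂V := by
            apply setLIntegral_mono (hGmeas.const_mul _ |>.const_mul _)
            intro w hw
            apply mul_le_mul_left
            apply le_trans (min_le_left _ _)
            unfold kap
            apply ENNReal.inv_le_inv.mpr
            apply ENNReal.ofReal_le_ofReal
            have : ¬ dist w x < r := hw
            rw [dist_eq_norm, norm_sub_rev] at this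
            linarith [not_lt.mp this]
      _ ≤ ∫⁻ w, (ENNReal.ofReal r)⁻¹ * (c4 * ∫⁻ z, kap w z ∂μ) ∂V :=
            lintegral_mono' Measure.restrict_le_self le_rfl
      _ = (ENNReal.ofReal r)⁻¹ * (c4 * ∫⁻ w, (∫⁻ z, kap w z ∂μ) ∂V) := by
            rw [lintegral_const_mul _ (hGmeas.const_mul _), lintegral_const_mul _ hGmeas]
      _ ≤ (ENNReal.ofReal r)⁻¹ * (c4 * ((ε + (ENNReal.ofReal r)⁻¹ * V Set.univ) * μ Set.univ)) :=
            mul_le_mul_right (mul_le_mul_right hGint _) _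
      _ = C1 := by rw [hC1]; ring
    -- near part
    have hnear : ∫⁻ w in ball x r, min (kap x w) (N:ℝ≥0∞) * (c4 * ∫⁻ z, kap w z ∂μ) ∂V
        ≤ 2⁻¹ * HN := by
      calc ∫⁻ w in ball x r, min (kap x w) (N:ℝ≥0∞) * (c4 * ∫⁻ z, kap w z ∂μ) ∂V
          = ∫⁻ w in ball x r, c4 * (min (kap x w) (N:ℝ≥0∞) * ∫⁻ z, kap w z ∂μ) ∂V := by
            apply lintegral_congr; intro w; ring
      _ = c4 * ∫⁻ w in ball x r, min (kap x w) (N:ℝ≥0∞) * ∫⁻ z, kap w z ∂μ ∂V :=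
            lintegral_const_mul c4 (((kap_meas' x).min measurable_const).mul hGmeas)
      _ = c4 * ∫⁻ w in ball x r, ∫⁻ z, min (kap x w) (N:ℝ≥0∞) * kap w z ∂μ ∂V := by
            congr 1
            apply lintegral_congr
            intro w
            rw [lintegral_const_mul _ (kap_meas' w)]
      _ = c4 * ∫⁻ z, (∫⁻ w in ball x r, min (kap x w) (N:ℝ≥0∞) * kap w z ∂V) ∂μ := by
            congr 1
            apply lintegral_lintegral_swap
            apply Measurable.aemeasurable
            apply Measurable.mul
            · exact ((kap_meas' x).min measurable_const).comp measurable_fst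
            · exact kap_meas2
      _ ≤ c4 * ∫⁻ z, 4 * ε * min (kap x z) (N:ℝ≥0∞) ∂μ := by
            apply mul_le_mul_right
            apply lintegral_mono
            intro z
            exact S2trunc hε x z N
      _ = c4 * (4 * ε) * HN := by
            rw [lintegral_const_mul _ hκNm, hHN]; ring
      _ ≤ 2⁻¹ * HN := by
            apply mul_le_mul_left
            calc c4 * (4 * ε) ≤ c4 * (4 * 1) := by
                  exact mul_le_mul_right (mul_le_mul_right hε1 _) _
            _ = c4 * 4 := by norm_num
            _ ≤ 2⁻¹ := c4_four_le
    have : HN ≤ 2⁻¹ * HN + C1 := by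
      calc HN ≤ _ := step12
      _ = _ + _ := hsplit.symm
      _ ≤ 2⁻¹ * HN + C1 := add_le_add hnear hfar
    exact half_absorb hHNfin this
  -- monotone convergence
  have : ∫⁻ z, kap x z ∂μ = ⨆ N : ℕ, ∫⁻ z, min (kap x z) N ∂μ := by
    rw [← lintegral_iSup (fun n => (kap_meas' x).min measurable_const)
      (fun i j hij z => min_le_min le_rfl (by exact_mod_cast Nat.cast_le.mpr hij))]
    apply lintegral_congr
    intro z
    exact (isup_min_nat _).symm
  rw [this]
  exact iSup_le key
end bootstrap


lemma ofReal_norm_integral_le {α : Type*} [MeasurableSpace α] (μ : Measure α) (f : α → ℂ) :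
    ENNReal.ofReal ‖∫ a, f a ∂μ‖ ≤ ∫⁻ a, ENNReal.ofReal ‖f a‖ ∂μ := by
  rcases eq_or_ne (∫⁻ a, ENNReal.ofReal ‖f a‖ ∂μ) ⊤ with h | h
  · rw [h]; exact le_top
  · calc ENNReal.ofReal ‖∫ a, f a ∂μ‖
        ≤ ENNReal.ofReal (∫⁻ a, ENNReal.ofReal ‖f a‖ ∂μ).toReal :=
          ENNReal.ofReal_le_ofReal (norm_integral_le_lintegral_norm f)
    _ = _ := ENNReal.ofReal_toReal h

lemma knorm (lam : ℝ) (x y : E3) :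
    ENNReal.ofReal ‖resKernelPos lam x y‖ ≤ c4 * kap x y := by
  rcases eq_or_lt_of_le (norm_nonneg (x - y)) with h0 | h0
  · have : resKernelPos lam x y = 0 := by
      unfold resKernelPos
      rw [← h0]
      norm_num
    rw [this]
    simp
  · set t : ℝ := ‖x - y‖ with ht
    have hnum : ‖Complex.exp (Complex.I * (lam : ℂ) * (t : ℝ))‖ = 1 := by
      rw [Complex.norm_exp]
      have : (Complex.I * (lam : ℂ) * ((t : ℝ) : ℂ)).re = 0 := by
        simp [Complex.mul_re, Complex.mul_im]
      rw [this, Real.exp_zero]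
    have hden : ‖(((4 * Real.pi * t : ℝ)) : ℂ)‖ = 4 * Real.pi * t := by
      rw [Complex.norm_real, Real.norm_eq_abs, abs_of_pos (by positivity)]
    have : ‖resKernelPos lam x y‖ = (4 * Real.pi * t)⁻¹ := by
      unfold resKernelPos
      rw [norm_div, hnum, hden, one_div]
    rw [this]
    have h4 : (0:ℝ) < 4 * Real.pi * t := by positivity
    rw [ENNReal.ofReal_inv_of_pos h4]
    unfold c4 kap
    rw [ENNReal.ofReal_mul (show (0:ℝ) ≤ 4 * Real.pi by positivity)]
    rw [ENNReal.mul_inv (Or.inl (ENNReal.ofReal_pos.mpr (by positivity)).ne') (Or.inl ENNReal.ofReal_ne_top)]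

lemma kernel_sm (lam : ℝ) (m : E3 → ℂ) (hm : Measurable m) :
    StronglyMeasurable (fun p : E3 × E3 => resKernelPos lam p.1 p.2 * m p.2) := by
  apply Measurable.stronglyMeasurable
  apply Measurable.mul _ (hm.comp measurable_snd)
  unfold resKernelPos
  have hc : Continuous fun p : E3 × E3 => ((‖p.1 - p.2‖ : ℝ) : ℂ) :=
    Complex.continuous_ofReal.comp (continuous_fst.sub continuous_snd).norm
  apply Measurable.div
  · exact (Complex.continuous_exp.comp (continuous_const.mul hc)).measurable
  · exact (Complex.continuous_ofReal.comp
      ((continuous_const.mul (continuous_fst.sub continuous_snd).norm) : Continuous fun p : E3 × E3 => 4 * Real.pi * ‖p.1 - p.2‖)).measurable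

section psi
variable (lam : ℝ) (m : E3 → ℂ) (μm : Measure E3) [IsFiniteMeasure μm]

noncomputable def psi (x : E3) : ℂ := ∫ y, resKernelPos lam x y * m y ∂μm

lemma psi_sm (hm : Measurable m) : StronglyMeasurable (psi lam m μm) :=
  StronglyMeasurable.integral_prod_right' (kernel_sm lam m hm)

lemma psi_bound (hm1 : ∀ x, ‖m x‖ = 1) (w : E3) :
    ENNReal.ofReal ‖psi lam m μm w‖ ≤ c4 * ∫⁻ z, kap w z ∂μm := by
  calc ENNReal.ofReal ‖psi lam m μm w‖
      ≤ ∫⁻ z, ENNReal.ofReal ‖resKernelPos lam w z * m z‖ ∂μm := ofReal_norm_integral_le _ _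
  _ ≤ ∫⁻ z, c4 * kap w z ∂μm := by
      apply lintegral_mono
      intro z
      show ENNReal.ofReal ‖resKernelPos lam w z * m z‖ ≤ c4 * kap w z
      rw [norm_mul, hm1, mul_one]
      exact knorm lam w z
  _ = c4 * ∫⁻ z, kap w z ∂μm := lintegral_const_mul c4 (kap_meas' w)
end psi

lemma conj_mul_self {z : ℂ} (hz : ‖z‖ = 1) : (starRingEnd ℂ) z * z = 1 := by
  rw [mul_comm, Complex.mul_conj, Complex.normSq_eq_norm_sq]
  rw [hz]
  norm_num

lemma domination {V μ : Measure E3} [IsFiniteMeasure V] [IsFiniteMeasure μ]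
    {v m ψ : E3 → ℂ} (hv : Measurable v) (hm : Measurable m)
    (hv1 : ∀ x, ‖v x‖ = 1) (hm1 : ∀ x, ‖m x‖ = 1) (hψ : StronglyMeasurable ψ)
    (heig : ∀ s : Set E3, MeasurableSet s →
      (∫ x in s, m x ∂μ) = -∫ x in s, v x * ψ x ∂V) :
    μ ≤ V.withDensity (fun x => ENNReal.ofReal ‖ψ x‖) := by
  rw [Measure.le_iff]
  intro s hs
  rw [withDensity_apply _ hs]
  rcases eq_or_ne (∫⁻ x in s, ENNReal.ofReal ‖ψ x‖ ∂V) ⊤ with htop | htop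
  · rw [htop]; exact le_top
  -- ψ integrable on s
  have hψint : Integrable ψ (V.restrict s) := by
    refine ⟨hψ.aestronglyMeasurable, ?_⟩
    rw [hasFiniteIntegral_iff_norm]
    exact htop.lt_top
  -- simple function identity
  have hsimple : ∀ φ : SimpleFunc E3 ℂ,
      ∫ x in s, (φ x) * m x ∂μ = -∫ x in s, (φ x) * (v x * ψ x) ∂V := by
    intro φ
    induction φ using SimpleFunc.induction with
    | @const c t ht =>
      simp only [SimpleFunc.coe_piecewise, SimpleFunc.coe_const, SimpleFunc.coe_zero,
        Set.piecewise_eq_indicator]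
      have e1 : ∀ g : E3 → ℂ, ∀ x, (t.indicator (Function.const E3 c) x) * g x
          = t.indicator (fun y => c * g y) x := by
        intro g x
        rw [← Set.indicator_mul_left]
        rfl
      calc ∫ x in s, (t.indicator (Function.const E3 c) x) * m x ∂μ
          = ∫ x in s, t.indicator (fun y => c * m y) x ∂μ := by
            apply integral_congr_ae; filter_upwards with x; exact e1 m x
      _ = ∫ x in s ∩ t, c * m x ∂μ := setIntegral_indicator ht
      _ = c * ∫ x in s ∩ t, m x ∂μ := integral_const_mul c m
      _ = c * (- ∫ x in s ∩ t, v x * ψ x ∂V) := by rw [heig (s ∩ t) (hs.inter ht)]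
      _ = -(c * ∫ x in s ∩ t, v x * ψ x ∂V) := by ring
      _ = -∫ x in s ∩ t, c * (v x * ψ x) ∂V := by rw [integral_const_mul]
      _ = -∫ x in s, t.indicator (fun y => c * (v y * ψ y)) x ∂V := by
            rw [setIntegral_indicator ht]
      _ = -∫ x in s, (t.indicator (Function.const E3 c) x) * (v x * ψ x) ∂V := by
            congr 1
            apply integral_congr_ae; filter_upwards with x; exact (e1 (fun y => v y * ψ y) x).symm
    | @add f g hdisj hf hg =>
      obtain ⟨Cf, hCf⟩ := f.exists_forall_norm_le
      obtain ⟨Cg, hCg⟩ := g.exists_forall_norm_le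
      have hInt1 : ∀ (φ : SimpleFunc E3 ℂ) (C : ℝ), (∀ x, ‖φ x‖ ≤ C) →
          Integrable (fun x => φ x * m x) (μ.restrict s) := by
        intro φ C hC
        apply Integrable.mono' (integrable_const C)
        · exact (φ.stronglyMeasurable.mul hm.stronglyMeasurable).aestronglyMeasurable
        · filter_upwards with x
          rw [norm_mul, hm1, mul_one]
          exact hC x
      have hInt2 : ∀ (φ : SimpleFunc E3 ℂ) (C : ℝ), (∀ x, ‖φ x‖ ≤ C) →
          Integrable (fun x => φ x * (v x * ψ x)) (V.restrict s) := by
        intro φ C hC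
        apply Integrable.mono' (hψint.norm.const_mul C)
        · exact (φ.stronglyMeasurable.mul
            (hv.stronglyMeasurable.mul hψ)).aestronglyMeasurable
        · filter_upwards with x
          rw [norm_mul, norm_mul, hv1, one_mul]
          exact mul_le_mul_of_nonneg_right (hC x) (norm_nonneg _)
      calc ∫ x in s, ((f + g) x) * m x ∂μ
          = ∫ x in s, (f x * m x + g x * m x) ∂μ := by
            apply integral_congr_ae; filter_upwards with x
            simp only [SimpleFunc.coe_add, Pi.add_apply]; ring
      _ = (∫ x in s, f x * m x ∂μ) + ∫ x in s, g x * m x ∂μ :=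
            integral_add (hInt1 f Cf hCf) (hInt1 g Cg hCg)
      _ = (-∫ x in s, f x * (v x * ψ x) ∂V) + -∫ x in s, g x * (v x * ψ x) ∂V := by
            rw [hf, hg]
      _ = -((∫ x in s, f x * (v x * ψ x) ∂V) + ∫ x in s, g x * (v x * ψ x) ∂V) := by ring
      _ = -∫ x in s, (f x * (v x * ψ x) + g x * (v x * ψ x)) ∂V := by
            rw [integral_add (hInt2 f Cf hCf) (hInt2 g Cg hCg)]
      _ = -∫ x in s, ((f + g) x) * (v x * ψ x) ∂V := by
            congr 1
            apply integral_congr_ae; filter_upwards with x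
            simp only [SimpleFunc.coe_add, Pi.add_apply]; ring
  -- approximation of conj ∘ m
  have hconjm : Measurable fun x => (starRingEnd ℂ) (m x) := (Complex.continuous_conj.measurable.comp hm)
  set φn : ℕ → SimpleFunc E3 ℂ :=
    SimpleFunc.approxOn _ hconjm Set.univ 0 (Set.mem_univ 0) with hφn
  have hφn_tendsto : ∀ x, Filter.Tendsto (fun n => φn n x) Filter.atTop
      (nhds ((starRingEnd ℂ) (m x))) := by
    intro x
    apply SimpleFunc.tendsto_approxOn
    simp [closure_univ]
  have hφn_norm : ∀ n x, ‖φn n x‖ ≤ 2 := by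
    intro n x
    calc ‖φn n x‖ ≤ ‖(starRingEnd ℂ) (m x)‖ + ‖(starRingEnd ℂ) (m x)‖ :=
          SimpleFunc.norm_approxOn_zero_le _ _ x n
    _ = 2 := by rw [RCLike.norm_conj, hm1]; norm_num
  -- limits
  have hlim1 : Filter.Tendsto (fun n => ∫ x in s, (φn n x) * m x ∂μ) Filter.atTop
      (nhds (∫ x in s, (starRingEnd ℂ) (m x) * m x ∂μ)) := by
    apply tendsto_integral_of_dominated_convergence (bound := fun _ => 2)
    · intro n
      exact ((φn n).stronglyMeasurable.mul hm.stronglyMeasurable).aestronglyMeasurable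
    · exact integrable_const 2
    · intro n
      filter_upwards with x
      rw [norm_mul, hm1, mul_one]
      exact hφn_norm n x
    · filter_upwards with x
      exact (hφn_tendsto x).mul_const (m x)
  have hlim2 : Filter.Tendsto (fun n => ∫ x in s, (φn n x) * (v x * ψ x) ∂V) Filter.atTop
      (nhds (∫ x in s, (starRingEnd ℂ) (m x) * (v x * ψ x) ∂V)) := by
    apply tendsto_integral_of_dominated_convergence (bound := fun x => 2 * ‖ψ x‖)
    · intro n
      exact ((φn n).stronglyMeasurable.mul
        (hv.stronglyMeasurable.mul hψ)).aestronglyMeasurable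
    · exact hψint.norm.const_mul 2
    · intro n
      filter_upwards with x
      rw [norm_mul, norm_mul, hv1, one_mul]
      exact mul_le_mul_of_nonneg_right (hφn_norm n x) (norm_nonneg _)
    · filter_upwards with x
      exact (hφn_tendsto x).mul_const _
  have hkey : ∫ x in s, (starRingEnd ℂ) (m x) * m x ∂μ
      = -∫ x in s, (starRingEnd ℂ) (m x) * (v x * ψ x) ∂V := by
    have : Filter.Tendsto (fun n => ∫ x in s, (φn n x) * m x ∂μ) Filter.atTop
        (nhds (-∫ x in s, (starRingEnd ℂ) (m x) * (v x * ψ x) ∂V)) := by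
      have : (fun n => ∫ x in s, (φn n x) * m x ∂μ)
          = fun n => -∫ x in s, (φn n x) * (v x * ψ x) ∂V := by
        funext n; exact hsimple (φn n)
      rw [this]
      exact hlim2.neg
    exact tendsto_nhds_unique hlim1 this
  -- conclude
  have hLHS : ∫ x in s, (starRingEnd ℂ) (m x) * m x ∂μ = ((μ s).toReal : ℂ) := by
    have : ∀ x : E3, (starRingEnd ℂ) (m x) * m x = 1 := fun x => conj_mul_self (hm1 x)
    calc ∫ x in s, (starRingEnd ℂ) (m x) * m x ∂μ = ∫ _x in s, (1:ℂ) ∂μ := by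
          apply integral_congr_ae; filter_upwards with x; rw [this x]
    _ = ((μ s).toReal : ℂ) := by
          rw [setIntegral_const]
          simp [Measure.real]
  have hRHS : ‖∫ x in s, (starRingEnd ℂ) (m x) * (v x * ψ x) ∂V‖
      ≤ (∫⁻ x in s, ENNReal.ofReal ‖ψ x‖ ∂V).toReal := by
    calc ‖∫ x in s, (starRingEnd ℂ) (m x) * (v x * ψ x) ∂V‖
        ≤ (∫⁻ x in s, ENNReal.ofReal ‖(starRingEnd ℂ) (m x) * (v x * ψ x)‖ ∂V).toReal :=
          norm_integral_le_lintegral_norm _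
    _ = (∫⁻ x in s, ENNReal.ofReal ‖ψ x‖ ∂V).toReal := by
          congr 1
          apply lintegral_congr
          intro x
          rw [norm_mul, norm_mul, RCLike.norm_conj, hm1, hv1, one_mul, one_mul]
  have : (μ s).toReal ≤ (∫⁻ x in s, ENNReal.ofReal ‖ψ x‖ ∂V).toReal := by
    have h1 : ‖∫ x in s, (starRingEnd ℂ) (m x) * m x ∂μ‖
        = ‖∫ x in s, (starRingEnd ℂ) (m x) * (v x * ψ x) ∂V‖ := by rw [hkey, norm_neg]
    rw [hLHS] at h1
    rw [Complex.norm_real, Real.norm_eq_abs, abs_of_nonneg ENNReal.toReal_nonneg] at h1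
    rw [h1]
    exact hRHS
  calc μ s = ENNReal.ofReal (μ s).toReal := (ENNReal.ofReal_toReal (measure_ne_top μ s)).symm
  _ ≤ ENNReal.ofReal (∫⁻ x in s, ENNReal.ofReal ‖ψ x‖ ∂V).toReal := ENNReal.ofReal_le_ofReal this
  _ = ∫⁻ x in s, ENNReal.ofReal ‖ψ x‖ ∂V := ENNReal.ofReal_toReal htop

lemma noatom {V : Measure E3} [IsFiniteMeasure V] {r : ℝ} (hr : 0 < r)
    (hF : ∀ y : E3, ∫⁻ x in ball y r, ENNReal.ofReal ‖x - y‖⁻¹ ∂V ≤ 1) :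
    ∀ y : E3, V {y} = 0 := by
  intro y₀
  by_contra hc
  set c := V {y₀} with hcdef
  have hc0 : 0 < c := pos_iff_ne_zero.mpr hc
  have hctop : c ≠ ⊤ := (measure_ne_top V _)
  obtain ⟨n, hn⟩ := ENNReal.exists_nat_gt (show c⁻¹ ≠ ⊤ by
    simp only [ne_eq, ENNReal.inv_eq_top]; exact hc0.ne')
  set t : ℝ := min (r / 2) ((n + 1 : ℝ))⁻¹ with htdef
  have ht0 : 0 < t := lt_min (by linarith) (by positivity)
  have htr : t < r := lt_of_le_of_lt (min_le_left _ _) (by linarith)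
  have htn : (n : ℝ) ≤ t⁻¹ := by
    have h1 : t ≤ ((n + 1 : ℝ))⁻¹ := min_le_right _ _
    have h2 : ((n + 1 : ℝ))⁻¹⁻¹ ≤ t⁻¹ := by
      apply inv_anti₀ ht0 h1
    rw [inv_inv] at h2
    linarith
  -- point at distance t from y₀
  set u : E3 := EuclideanSpace.single (0 : Fin 3) (1 : ℝ) with hu
  have hunorm : ‖u‖ = 1 := by
    rw [hu, EuclideanSpace.norm_single, norm_one]
  set y : E3 := y₀ + t • u with hy
  have hdist : ‖y₀ - y‖ = t := by
    rw [hy]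
    simp only [sub_add_eq_sub_sub, sub_self, zero_sub, norm_neg, norm_smul, hunorm,
      Real.norm_eq_abs, abs_of_pos ht0, mul_one]
  have hmem : y₀ ∈ ball y r := by
    rw [mem_ball, dist_eq_norm, hdist]; exact htr
  have hlow : ENNReal.ofReal t⁻¹ * c ≤ 1 := by
    calc ENNReal.ofReal t⁻¹ * c = ∫⁻ x in {y₀}, ENNReal.ofReal ‖x - y‖⁻¹ ∂V := by
          rw [lintegral_singleton, hdist]
    _ ≤ ∫⁻ x in ball y r, ENNReal.ofReal ‖x - y‖⁻¹ ∂V :=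
          lintegral_mono_set (Set.singleton_subset_iff.mpr hmem)
    _ ≤ 1 := hF y
  have hup : ENNReal.ofReal t⁻¹ ≤ c⁻¹ := ENNReal.le_inv_iff_mul_le.mpr hlow
  have hlower : (n : ℝ≥0∞) ≤ ENNReal.ofReal t⁻¹ := by
    rw [← ENNReal.ofReal_natCast n]
    exact ENNReal.ofReal_le_ofReal htn
  exact absurd (hlower.trans hup) (not_le.mpr hn)

lemma kap_kato {V : Measure E3} {r : ℝ} (hatom : ∀ y : E3, V {y} = 0)
    (hF : ∀ y : E3, ∫⁻ x in ball y r, ENNReal.ofReal ‖x - y‖⁻¹ ∂V ≤ 1) :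
    ∀ y : E3, ∫⁻ w in ball y r, kap w y ∂V ≤ 1 := by
  intro y
  have heq : ∫⁻ w in ball y r, kap w y ∂V = ∫⁻ w in ball y r, ENNReal.ofReal ‖w - y‖⁻¹ ∂V := by
    apply lintegral_congr_ae
    have hnull : (V.restrict (ball y r)) {y} = 0 := by
      rw [Measure.restrict_apply (measurableSet_singleton y)]
      exact measure_mono_null Set.inter_subset_left (hatom y)
    rw [Filter.eventuallyEq_iff_exists_mem]
    refine ⟨{y}ᶜ, ?_, ?_⟩
    · rw [mem_ae_iff, compl_compl]; exact hnull
    · intro w hw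
      have hne : w ≠ y := hw
      have hpos : 0 < ‖w - y‖ := by
        rw [norm_pos_iff, sub_ne_zero]; exact hne
      show kap w y = ENNReal.ofReal ‖w - y‖⁻¹
      unfold kap
      rw [ENNReal.ofReal_inv_of_pos hpos]
  rw [heq]
  exact hF y

theorem stmt6' (Vm μm : Measure E3)
    [IsFiniteMeasure Vm] [IsFiniteMeasure μm]
    (v m : E3 → ℂ) (hv : Measurable v) (hm : Measurable m)
    (hv1 : ∀ x, ‖v x‖ = 1) (hm1 : ∀ x, ‖m x‖ = 1)
    (hlocal : Filter.Tendsto (fun r : ℝ => ⨆ y : E3,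
        ∫⁻ x in ball y r, ENNReal.ofReal ‖x - y‖⁻¹ ∂Vm)
      (nhdsWithin 0 (Set.Ioi 0)) (nhds 0))
    (lam : ℝ)
    (heig : ∀ s : Set E3, MeasurableSet s →
      (∫ x in s, m x ∂μm) =
        -∫ x in s, v x * (∫ y, resKernelPos lam x y * m y ∂μm) ∂Vm) :
    ∃ B : ℝ, ∀ x : E3,
      ‖∫ y, resKernelPos lam x y * m y ∂μm‖ ≤ B := by
  -- get radius
  have hev : ∀ᶠ r in nhdsWithin (0:ℝ) (Set.Ioi 0),
      (⨆ y : E3, ∫⁻ x in ball y r, ENNReal.ofReal ‖x - y‖⁻¹ ∂Vm) < 1 := by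
    apply hlocal.eventually_lt_const
    norm_num
  obtain ⟨r, hr1, hr0⟩ := (hev.and eventually_mem_nhdsWithin).exists
  have hr0 : (0:ℝ) < r := hr0
  have hF : ∀ y : E3, ∫⁻ x in ball y r, ENNReal.ofReal ‖x - y‖⁻¹ ∂Vm ≤ 1 :=
    fun y => le_trans (le_iSup (fun y : E3 => ∫⁻ x in ball y r, ENNReal.ofReal ‖x - y‖⁻¹ ∂Vm) y) hr1.le
  have hatom := noatom hr0 hF
  have hε := kap_kato hatom hF
  -- ψ
  have hψsm := psi_sm lam m μm hm
  have hΨm : Measurable fun x => ENNReal.ofReal ‖psi lam m μm x‖ :=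
    hψsm.measurable.norm.ennreal_ofReal
  have hdom : μm ≤ Vm.withDensity (fun x => ENNReal.ofReal ‖psi lam m μm x‖) :=
    domination hv hm hv1 hm1 hψsm (fun s hs => heig s hs)
  have hboot := bootstrap hr0 le_rfl hε hΨm hdom (psi_bound lam m μm hm1)
  set C1 : ℝ≥0∞ :=
    c4 * ((ENNReal.ofReal r)⁻¹ * ((1 + (ENNReal.ofReal r)⁻¹ * Vm Set.univ) * μm Set.univ)) with hC1
  set Bfin : ℝ≥0∞ := c4 * (2 * C1) with hBfin
  have hBfin_ne : Bfin ≠ ⊤ := by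
    have hinv : (ENNReal.ofReal r)⁻¹ ≠ ⊤ := by
      simp only [ne_eq, ENNReal.inv_eq_top]
      exact (ENNReal.ofReal_pos.mpr hr0).ne'
    rw [hBfin, hC1]
    apply ENNReal.mul_ne_top c4_ne_top
    apply ENNReal.mul_ne_top (by norm_num)
    apply ENNReal.mul_ne_top c4_ne_top
    apply ENNReal.mul_ne_top hinv
    apply ENNReal.mul_ne_top
    · exact ENNReal.add_ne_top.mpr ⟨by norm_num, ENNReal.mul_ne_top hinv (measure_ne_top _ _)⟩
    · exact measure_ne_top _ _
  refine ⟨Bfin.toReal, fun x => ?_⟩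
  have h1 : ENNReal.ofReal ‖psi lam m μm x‖ ≤ Bfin := by
    calc ENNReal.ofReal ‖psi lam m μm x‖ ≤ c4 * ∫⁻ z, kap x z ∂μm := psi_bound lam m μm hm1 x
    _ ≤ c4 * (2 * C1) := mul_le_mul_right (hboot x) _
  have : ‖psi lam m μm x‖ ≤ Bfin.toReal := by
    rw [← ENNReal.toReal_ofReal (norm_nonneg (psi lam m μm x))]
    exact ENNReal.toReal_mono hBfin_ne h1
  exact this

/-- Let `V` and `μ` be finite complex measures on ℝ³ (given here
by their total variations `Vm`, `μm` and unimodular densities `v`, `m`), with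
`μ = −V·(R₀⁺(λ²)μ)` for some `λ ≠ 0`, and suppose `|V|` satisfies the local
Kato condition.  Then `ψ = R₀⁺(λ²)μ` is a bounded function. -/
theorem stmt6 (Vm μm : Measure (EuclideanSpace ℝ (Fin 3)))
    [IsFiniteMeasure Vm] [IsFiniteMeasure μm]
    (v m : EuclideanSpace ℝ (Fin 3) → ℂ) (hv : Measurable v) (hm : Measurable m)
    (hv1 : ∀ x, ‖v x‖ = 1) (hm1 : ∀ x, ‖m x‖ = 1)
    (hlocal : Tendsto (fun r : ℝ => ⨆ y : EuclideanSpace ℝ (Fin 3),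
        ∫⁻ x in ball y r, ENNReal.ofReal ‖x - y‖⁻¹ ∂Vm)
      (nhdsWithin 0 (Set.Ioi 0)) (nhds 0))
    (lam : ℝ) (hlam : lam ≠ 0)
    (heig : ∀ s : Set (EuclideanSpace ℝ (Fin 3)), MeasurableSet s →
      (∫ x in s, m x ∂μm) =
        -∫ x in s, v x * (∫ y, resKernelPos lam x y * m y ∂μm) ∂Vm) :
    ∃ B : ℝ, ∀ x : EuclideanSpace ℝ (Fin 3),
      ‖∫ y, resKernelPos lam x y * m y ∂μm‖ ≤ B :=
  stmt6' Vm μm v m hv hm hv1 hm1 hlocal lam heig
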